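/- arXiv:2108.01467 — 5 statements merged into one kernel-verified Lean document; each statement's English description precedes it below -/
import Mathlib

section
/- Let K be a bounded operator on H, and let Λ_TU = {(W_j, Λ_j, v_j)}_{j∈J} and Γ_TU = {(W_j, Γ_j, v_j)}_{j∈J} (with Γ_j : H → H_j bounded) be (T,U)-controlled K-g-fusion frames for H with bounds (A, B) and (C, D) respectively. Let V, W be bounded operators on H such that R := V + W is invertible, K R = R K, and R* commutes with both T and U. Assume that for every j ∈ J and every f ∈ H, ⟨Γ_j P_{W_j} R* U f, Λ_j P_{W_j} R* T f⟩ = 0 and ⟨Λ_j P_{W_j} R* U f, Γ_j P_{W_j} R* T f⟩ = 0. Then for every f ∈ H, A ‖R^{-1}‖^{-2} ‖K* f‖² ≤ ∑_{j∈J} v_j² Re⟨(Λ_j + Γ_j) P_{W_j} R* P_{R W_j} U f, (Λ_j + Γ_j) P_{W_j} R* P_{R W_j} T f⟩ ≤ (B + D) ‖R‖² ‖f‖², where P_{R W_j} denotes the orthogonal projection onto the closed subspace R W_j (the image of W_j under the invertible operator R). In other words, Δ_TU = {(R W_j, (Λ_j + Γ_j) P_{W_j} R*, v_j)}_{j∈J}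 is a (T,U)-controlled K-g-fusion frame for H. -/
open ContinuousLinearMap
open scoped ComplexInnerProductSpace

/-- The orthogonal projection of `H` onto a closed subspace `W`, viewed as an operator
`H →L[ℂ] H`. -/
noncomputable def proj {H : Type*} [NormedAddCommGroup H] [InnerProductSpace ℂ H]
    (W : Submodule ℂ H) [W.HasOrthogonalProjection] : H →L[ℂ] H :=
  W.subtypeL.comp W.orthogonalProjectionOnto

set_option maxHeartbeats 1000000 in
/-- given two `(T,U)`-controlled `K`-g-fusion frames `Λ_TU`, `Γ_TU` over the same
subspaces, and bounded operators `V, W` with `R := V + W` invertible, `K R = R K`, `R*`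
commuting with `T` and `U`, and the mutual "cross terms" vanishing, the family
`Δ_TU = {(R W_j, (Λ_j + Γ_j) P_{W_j} R*, v_j)}` is a `(T,U)`-controlled `K`-g-fusion frame
with bounds `A ‖R⁻¹‖⁻²` and `(B + D) ‖R‖²`. -/
theorem stmt2
    {H : Type*} [NormedAddCommGroup H] [InnerProductSpace ℂ H] [CompleteSpace H]
    {J : Type*} [Countable J]
    {Hj : J → Type*} [∀ j, NormedAddCommGroup (Hj j)] [∀ j, InnerProductSpace ℂ (Hj j)]
    [∀ j, CompleteSpace (Hj j)]
    (W : J → Submodule ℂ H) [∀ j, CompleteSpace (W j)]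
    (v : J → ℝ) (hv : ∀ j, 0 < v j)
    (Λ Γ : ∀ j, H →L[ℂ] Hj j)
    (T U K : H →L[ℂ] H)
    -- `T` and `U` are invertible
    (Tinv Uinv : H →L[ℂ] H)
    (hT₁ : Tinv ∘L T = 1) (hT₂ : T ∘L Tinv = 1)
    (hU₁ : Uinv ∘L U = 1) (hU₂ : U ∘L Uinv = 1)
    -- `Λ_TU` is a `(T,U)`-controlled `K`-g-fusion frame with bounds `A, B`
    (A B : ℝ) (hA : 0 < A) (hAB : A ≤ B)
    (hsumΛ : ∀ f : H, Summable fun j =>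
      ((v j : ℂ) ^ 2) * ⟪(Λ j) (proj (W j) (U f)), (Λ j) (proj (W j) (T f))⟫)
    (hlowerΛ : ∀ f : H, A * ‖(adjoint K) f‖ ^ 2
      ≤ ∑' j, (v j) ^ 2 * (⟪(Λ j) (proj (W j) (U f)), (Λ j) (proj (W j) (T f))⟫).re)
    (hupperΛ : ∀ f : H,
      (∑' j, (v j) ^ 2 * (⟪(Λ j) (proj (W j) (U f)), (Λ j) (proj (W j) (T f))⟫).re)
        ≤ B * ‖f‖ ^ 2)
    -- `Γ_TU` is a `(T,U)`-controlled `K`-g-fusion frame with bounds `C, D`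
    (C D : ℝ) (hC : 0 < C) (hCD : C ≤ D)
    (hsumΓ : ∀ f : H, Summable fun j =>
      ((v j : ℂ) ^ 2) * ⟪(Γ j) (proj (W j) (U f)), (Γ j) (proj (W j) (T f))⟫)
    (hlowerΓ : ∀ f : H, C * ‖(adjoint K) f‖ ^ 2
      ≤ ∑' j, (v j) ^ 2 * (⟪(Γ j) (proj (W j) (U f)), (Γ j) (proj (W j) (T f))⟫).re)
    (hupperΓ : ∀ f : H,
      (∑' j, (v j) ^ 2 * (⟪(Γ j) (proj (W j) (U f)), (Γ j) (proj (W j) (T f))⟫).re)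
        ≤ D * ‖f‖ ^ 2)
    -- `R = V + W` is invertible, `K R = R K` and `R*` commutes with `T` and `U`
    (V W' Rop Rinv : H →L[ℂ] H) (hRdef : Rop = V + W')
    [∀ j, CompleteSpace ((W j).map (Rop : H →ₗ[ℂ] H))]
    (hR₁ : Rinv ∘L Rop = 1) (hR₂ : Rop ∘L Rinv = 1)
    (hKR : K ∘L Rop = Rop ∘L K)
    (hRT : (adjoint Rop) ∘L T = T ∘L (adjoint Rop))
    (hRU : (adjoint Rop) ∘L U = U ∘L (adjoint Rop))
    -- the cross terms vanish
    (hcross₁ : ∀ (j : J) (f : H),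
      ⟪(Γ j) (proj (W j) ((adjoint Rop) (U f))),
        (Λ j) (proj (W j) ((adjoint Rop) (T f)))⟫ = 0)
    (hcross₂ : ∀ (j : J) (f : H),
      ⟪(Λ j) (proj (W j) ((adjoint Rop) (U f))),
        (Γ j) (proj (W j) ((adjoint Rop) (T f)))⟫ = 0) :
    ∀ f : H,
      (Summable fun j => ((v j : ℂ) ^ 2) *
        ⟪(Λ j + Γ j) (proj (W j) ((adjoint Rop) (proj ((W j).map (Rop : H →ₗ[ℂ] H)) (U f)))),
          (Λ j + Γ j) (proj (W j) ((adjoint Rop) (proj ((W j).map (Rop : H →ₗ[ℂ] H)) (T f))))⟫) ∧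
      A * (‖Rinv‖ ^ 2)⁻¹ * ‖(adjoint K) f‖ ^ 2
        ≤ (∑' j, (v j) ^ 2 *
            (⟪(Λ j + Γ j) (proj (W j) ((adjoint Rop) (proj ((W j).map (Rop : H →ₗ[ℂ] H)) (U f)))),
              (Λ j + Γ j) (proj (W j) ((adjoint Rop) (proj ((W j).map (Rop : H →ₗ[ℂ] H)) (T f))))⟫).re) ∧
      (∑' j, (v j) ^ 2 *
          (⟪(Λ j + Γ j) (proj (W j) ((adjoint Rop) (proj ((W j).map (Rop : H →ₗ[ℂ] H)) (U f)))),
            (Λ j + Γ j) (proj (W j) ((adjoint Rop) (proj ((W j).map (Rop : H →ₗ[ℂ] H)) (T f))))⟫).re)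
        ≤ (B + D) * ‖Rop‖ ^ 2 * ‖f‖ ^ 2 :=  by
  classical
  intro f
  set f' : H := adjoint Rop f with hf'
  have proj_apply : ∀ (M : Submodule ℂ H) [M.HasOrthogonalProjection] (x : H),
      proj M x = (M.orthogonalProjectionOnto x : H) := fun M _ x => rfl
  -- key projection identity: P_{W j} R* P_{R W j} = P_{W j} R*
  have key : ∀ (j : J) (g : H),
      proj (W j) ((adjoint Rop) (proj ((W j).map (Rop : H →ₗ[ℂ] H)) g)) = proj (W j) ((adjoint Rop) g) := by
    intro j g
    have hmem : g - (((W j).map (Rop : H →ₗ[ℂ] H)).orthogonalProjectionOnto g : H) ∈ ((W j).map (Rop : H →ₗ[ℂ] H))ᗮ :=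
      Submodule.sub_starProjection_mem_orthogonal g
    have hq : (adjoint Rop) (g - (((W j).map (Rop : H →ₗ[ℂ] H)).orthogonalProjectionOnto g : H)) ∈ (W j)ᗮ := by
      rw [Submodule.mem_orthogonal']
      intro u hu
      rw [adjoint_inner_left]
      exact ((Submodule.mem_orthogonal' _ _).mp hmem) _ (Submodule.mem_map_of_mem hu)
    have h0 : proj (W j) ((adjoint Rop) (g - (((W j).map (Rop : H →ₗ[ℂ] H)).orthogonalProjectionOnto g : H))) = 0 := by
      rw [proj_apply, Submodule.orthogonalProjectionOnto_apply_of_mem_orthogonal hq]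
      simp
    have h1 : proj (W j) ((adjoint Rop) g)
        - proj (W j) ((adjoint Rop) (proj ((W j).map (Rop : H →ₗ[ℂ] H)) g)) = 0 := by
      rw [← map_sub, ← map_sub]
      rw [proj_apply ((W j).map (Rop : H →ₗ[ℂ] H)) g]
      exact h0
    exact (sub_eq_zero.mp h1).symm
  have hU' : (adjoint Rop) (U f) = U f' := by
    have := ContinuousLinearMap.ext_iff.mp hRU f
    simpa using this
  have hT' : (adjoint Rop) (T f) = T f' := by
    have := ContinuousLinearMap.ext_iff.mp hRT f
    simpa using this
  -- each term splits into the Λ-term and the Γ-term at f'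
  have hterm : ∀ j : J,
      ⟪(Λ j + Γ j) (proj (W j) ((adjoint Rop) (proj ((W j).map (Rop : H →ₗ[ℂ] H)) (U f)))),
        (Λ j + Γ j) (proj (W j) ((adjoint Rop) (proj ((W j).map (Rop : H →ₗ[ℂ] H)) (T f))))⟫
      = ⟪(Λ j) (proj (W j) (U f')), (Λ j) (proj (W j) (T f'))⟫
        + ⟪(Γ j) (proj (W j) (U f')), (Γ j) (proj (W j) (T f'))⟫ := by
    intro j
    have h1 := hcross₁ j f
    have h2 := hcross₂ j f
    rw [hU', hT'] at h1 h2
    rw [key j (U f), key j (T f), hU', hT']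
    simp only [ContinuousLinearMap.add_apply, inner_add_left, inner_add_right, h1, h2]
    ring
  -- summability
  have hsum : Summable fun j => ((v j : ℂ) ^ 2) *
      ⟪(Λ j + Γ j) (proj (W j) ((adjoint Rop) (proj ((W j).map (Rop : H →ₗ[ℂ] H)) (U f)))),
        (Λ j + Γ j) (proj (W j) ((adjoint Rop) (proj ((W j).map (Rop : H →ₗ[ℂ] H)) (T f))))⟫ := by
    refine ((hsumΛ f').add (hsumΓ f')).congr fun j => ?_
    rw [hterm j, mul_add]
  refine ⟨hsum, ?_⟩
  -- real-part summability
  have hre : ∀ (z : ℂ) (r : ℝ), ((r : ℂ) ^ 2 * z).re = r ^ 2 * z.re := by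
    intro z r
    rw [← Complex.ofReal_pow, Complex.re_ofReal_mul]
  have hsumΛre : Summable fun j => (v j) ^ 2 *
      (⟪(Λ j) (proj (W j) (U f')), (Λ j) (proj (W j) (T f'))⟫).re := by
    have := (hsumΛ f').map (Complex.reCLM : ℂ →L[ℝ] ℝ) Complex.continuous_re
    refine this.congr fun j => ?_
    simp [Function.comp, hre]
  have hsumΓre : Summable fun j => (v j) ^ 2 *
      (⟪(Γ j) (proj (W j) (U f')), (Γ j) (proj (W j) (T f'))⟫).re := by
    have := (hsumΓ f').map (Complex.reCLM : ℂ →L[ℝ] ℝ) Complex.continuous_re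
    refine this.congr fun j => ?_
    simp [Function.comp, hre]
  -- the real-part tsum splits
  have hS : (∑' j, (v j) ^ 2 *
        (⟪(Λ j + Γ j) (proj (W j) ((adjoint Rop) (proj ((W j).map (Rop : H →ₗ[ℂ] H)) (U f)))),
          (Λ j + Γ j) (proj (W j) ((adjoint Rop) (proj ((W j).map (Rop : H →ₗ[ℂ] H)) (T f))))⟫).re)
      = (∑' j, (v j) ^ 2 * (⟪(Λ j) (proj (W j) (U f')), (Λ j) (proj (W j) (T f'))⟫).re)
        + (∑' j, (v j) ^ 2 * (⟪(Γ j) (proj (W j) (U f')), (Γ j) (proj (W j) (T f'))⟫).re) := by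
    rw [← Summable.tsum_add hsumΛre hsumΓre]
    refine tsum_congr fun j => ?_
    rw [hterm j, Complex.add_re, mul_add]
  rw [hS]
  have hnormf' : ‖f'‖ ≤ ‖Rop‖ * ‖f‖ := by
    have h1 : ‖f'‖ ≤ ‖adjoint Rop‖ * ‖f‖ := (adjoint Rop).le_opNorm f
    have h2 : ‖adjoint Rop‖ = ‖Rop‖ := adjoint.norm_map Rop
    rw [h2] at h1
    exact h1
  constructor
  · -- lower bound
    have hcomp : Rop ∘L K ∘L Rinv = K := by
      calc Rop ∘L K ∘L Rinv = (Rop ∘L K) ∘L Rinv := by rw [ContinuousLinearMap.comp_assoc]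
        _ = (K ∘L Rop) ∘L Rinv := by rw [hKR]
        _ = K ∘L (Rop ∘L Rinv) := by rw [ContinuousLinearMap.comp_assoc]
        _ = K := by rw [hR₂]; ext x; simp
    have hKfeq : adjoint K f = adjoint Rinv ((adjoint K) f') := by
      conv_lhs => rw [← hcomp]
      rw [adjoint_comp, adjoint_comp]
      rfl
    have hKf : ‖adjoint K f‖ ≤ ‖Rinv‖ * ‖adjoint K f'‖ := by
      rw [hKfeq]
      have h1 : ‖adjoint Rinv ((adjoint K) f')‖ ≤ ‖adjoint Rinv‖ * ‖adjoint K f'‖ :=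
        (adjoint Rinv).le_opNorm _
      rwa [adjoint.norm_map Rinv] at h1
    have hstep : A * (‖Rinv‖ ^ 2)⁻¹ * ‖adjoint K f‖ ^ 2 ≤ A * ‖adjoint K f'‖ ^ 2 := by
      rcases eq_or_lt_of_le (norm_nonneg Rinv) with h0 | hpos
      · have hz : ‖adjoint K f‖ = 0 := by
          have := hKf
          rw [← h0] at this
          simp at this
          exact le_antisymm (by simpa using this) (norm_nonneg _)
        rw [hz]
        have : A * ‖adjoint K f'‖ ^ 2 ≥ 0 := by positivity
        simpa using this
      · have hsq : ‖adjoint K f‖ ^ 2 ≤ ‖Rinv‖ ^ 2 * ‖adjoint K f'‖ ^ 2 := by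
          nlinarith [hKf, norm_nonneg (adjoint K f), norm_nonneg (adjoint K f'),
            norm_nonneg Rinv]
        have h2 : (‖Rinv‖ ^ 2)⁻¹ * ‖adjoint K f‖ ^ 2 ≤ ‖adjoint K f'‖ ^ 2 := by
          rw [inv_mul_le_iff₀ (by positivity)]
          linarith [hsq]
        calc A * (‖Rinv‖ ^ 2)⁻¹ * ‖adjoint K f‖ ^ 2
            = A * ((‖Rinv‖ ^ 2)⁻¹ * ‖adjoint K f‖ ^ 2) := by ring
          _ ≤ A * ‖adjoint K f'‖ ^ 2 := by
              exact mul_le_mul_of_nonneg_left h2 (le_of_lt hA)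
    have hΛlow := hlowerΛ f'
    have hΓlow := hlowerΓ f'
    have hΓ0 : (0 : ℝ) ≤ ∑' j, (v j) ^ 2 *
        (⟪(Γ j) (proj (W j) (U f')), (Γ j) (proj (W j) (T f'))⟫).re := by
      have : (0 : ℝ) ≤ C * ‖adjoint K f'‖ ^ 2 := by positivity
      linarith
    linarith
  · -- upper bound
    have hΛup := hupperΛ f'
    have hΓup := hupperΓ f'
    have hB : 0 < B := lt_of_lt_of_le hA hAB
    have hD : 0 < D := lt_of_lt_of_le hC hCD
    have hf2 : ‖f'‖ ^ 2 ≤ ‖Rop‖ ^ 2 * ‖f‖ ^ 2 := by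
      nlinarith [hnormf', norm_nonneg f', norm_nonneg f, norm_nonneg Rop]
    nlinarith [hf2, norm_nonneg f', sq_nonneg ‖f'‖]
end

section
/- Let Λ = {(W_j, Λ_j, v_j)}_{j∈J} be a (T,T₁)-controlled K₁-g-fusion frame for H with bounds A, B, and let Γ = {(V_j, Γ_j, v_j)}_{j∈J} be a (U,U₁)-controlled K₂-g-fusion frame for X with bounds C, D, where K₁, K₂ are bounded operators on H and X respectively, and T, T₁ (on H) and U, U₁ (on X) are bounded invertible operators. Then for every (f, g) ∈ H ⊕ X, min{A, C} ‖(K₁ ⊕ K₂)* (f, g)‖² ≤ ∑_{j∈J} v_j² Re⟨(Λ_j ⊕ Γ_j) P_{W_j ⊕ V_j} (T₁ ⊕ U₁)(f, g), (Λ_j ⊕ Γ_j) P_{W_j ⊕ V_j} (T ⊕ U)(f, g)⟩ ≤ max{B, D} ‖(f, g)‖²; that is, Λ ⊕ Γ = {(W_j ⊕ V_j, Λ_j ⊕ Γ_j, v_j)}_{j∈J} is a (T ⊕ U, T₁ ⊕ U₁)-controlled (K₁ ⊕ K₂)-g-fusion frame for H ⊕ X with bounds min{A, C} and max{B, D}.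 -/
open ContinuousLinearMap
open scoped ComplexInnerProductSpace

/-- if `Λ` is a `(T,T₁)`-controlled `K₁`-g-fusion frame for `H` with bounds
`A, B` and `Γ` is a `(U,U₁)`-controlled `K₂`-g-fusion frame for `X` with bounds `C, D`, then
`Λ ⊕ Γ` is a `(T ⊕ U, T₁ ⊕ U₁)`-controlled `(K₁ ⊕ K₂)`-g-fusion frame for `H ⊕ X` with bounds
`min A C` and `max B D`.  All direct-sum data is expressed componentwise: the inner product
on `H ⊕ X` is the sum of the component inner products, `‖(f, g)‖² = ‖f‖² + ‖g‖²`,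
`(K₁ ⊕ K₂)* = K₁* ⊕ K₂*`, `(Λ_j ⊕ Γ_j) P_{W_j ⊕ V_j} (T₁ ⊕ U₁)(f, g) =
(Λ_j P_{W_j} T₁ f, Γ_j P_{V_j} U₁ g)`, etc. -/
theorem stmt3
    {H : Type*} [NormedAddCommGroup H] [InnerProductSpace ℂ H] [CompleteSpace H]
    {X : Type*} [NormedAddCommGroup X] [InnerProductSpace ℂ X] [CompleteSpace X]
    {J : Type*} [Countable J]
    {Hj : J → Type*} [∀ j, NormedAddCommGroup (Hj j)] [∀ j, InnerProductSpace ℂ (Hj j)]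
    [∀ j, CompleteSpace (Hj j)]
    {Xj : J → Type*} [∀ j, NormedAddCommGroup (Xj j)] [∀ j, InnerProductSpace ℂ (Xj j)]
    [∀ j, CompleteSpace (Xj j)]
    (W : J → Submodule ℂ H) [∀ j, CompleteSpace (W j)]
    (V : J → Submodule ℂ X) [∀ j, CompleteSpace (V j)]
    (v : J → ℝ) (hv : ∀ j, 0 < v j)
    (Λ : ∀ j, H →L[ℂ] Hj j) (Γ : ∀ j, X →L[ℂ] Xj j)
    (T T₁ K₁ : H →L[ℂ] H) (U U₁ K₂ : X →L[ℂ] X)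
    -- `T`, `T₁`, `U`, `U₁` are invertible
    (Tinv T₁inv : H →L[ℂ] H) (Uinv U₁inv : X →L[ℂ] X)
    (hT₁ : Tinv ∘L T = 1) (hT₂ : T ∘L Tinv = 1)
    (hT₁' : T₁inv ∘L T₁ = 1) (hT₂' : T₁ ∘L T₁inv = 1)
    (hU₁ : Uinv ∘L U = 1) (hU₂ : U ∘L Uinv = 1)
    (hU₁' : U₁inv ∘L U₁ = 1) (hU₂' : U₁ ∘L U₁inv = 1)
    -- `Λ` is a `(T,T₁)`-controlled `K₁`-g-fusion frame for `H` with bounds `A, B`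
    (A B : ℝ) (hA : 0 < A) (hAB : A ≤ B)
    (hsumΛ : ∀ f : H, Summable fun j =>
      ((v j : ℂ) ^ 2) * ⟪(Λ j) (proj (W j) (T₁ f)), (Λ j) (proj (W j) (T f))⟫)
    (hlowerΛ : ∀ f : H, A * ‖(adjoint K₁) f‖ ^ 2
      ≤ ∑' j, (v j) ^ 2 * (⟪(Λ j) (proj (W j) (T₁ f)), (Λ j) (proj (W j) (T f))⟫).re)
    (hupperΛ : ∀ f : H,
      (∑' j, (v j) ^ 2 * (⟪(Λ j) (proj (W j) (T₁ f)), (Λ j) (proj (W j) (T f))⟫).re)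
        ≤ B * ‖f‖ ^ 2)
    -- `Γ` is a `(U,U₁)`-controlled `K₂`-g-fusion frame for `X` with bounds `C, D`
    (C D : ℝ) (hC : 0 < C) (hCD : C ≤ D)
    (hsumΓ : ∀ g : X, Summable fun j =>
      ((v j : ℂ) ^ 2) * ⟪(Γ j) (proj (V j) (U₁ g)), (Γ j) (proj (V j) (U g))⟫)
    (hlowerΓ : ∀ g : X, C * ‖(adjoint K₂) g‖ ^ 2
      ≤ ∑' j, (v j) ^ 2 * (⟪(Γ j) (proj (V j) (U₁ g)), (Γ j) (proj (V j) (U g))⟫).re)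
    (hupperΓ : ∀ g : X,
      (∑' j, (v j) ^ 2 * (⟪(Γ j) (proj (V j) (U₁ g)), (Γ j) (proj (V j) (U g))⟫).re)
        ≤ D * ‖g‖ ^ 2) :
    ∀ (f : H) (g : X),
      (Summable fun j => ((v j : ℂ) ^ 2) *
        (⟪(Λ j) (proj (W j) (T₁ f)), (Λ j) (proj (W j) (T f))⟫ +
          ⟪(Γ j) (proj (V j) (U₁ g)), (Γ j) (proj (V j) (U g))⟫)) ∧
      min A C * (‖(adjoint K₁) f‖ ^ 2 + ‖(adjoint K₂) g‖ ^ 2)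
        ≤ (∑' j, (v j) ^ 2 *
            (⟪(Λ j) (proj (W j) (T₁ f)), (Λ j) (proj (W j) (T f))⟫ +
              ⟪(Γ j) (proj (V j) (U₁ g)), (Γ j) (proj (V j) (U g))⟫).re) ∧
      (∑' j, (v j) ^ 2 *
          (⟪(Λ j) (proj (W j) (T₁ f)), (Λ j) (proj (W j) (T f))⟫ +
            ⟪(Γ j) (proj (V j) (U₁ g)), (Γ j) (proj (V j) (U g))⟫).re)
        ≤ max B D * (‖f‖ ^ 2 + ‖g‖ ^ 2) := by
  intro f g
  have hsΛ : Summable fun j => ((v j : ℂ) ^ 2) *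
      ⟪(Λ j) (proj (W j) (T₁ f)), (Λ j) (proj (W j) (T f))⟫ := hsumΛ f
  have hsΓ : Summable fun j => ((v j : ℂ) ^ 2) *
      ⟪(Γ j) (proj (V j) (U₁ g)), (Γ j) (proj (V j) (U g))⟫ := hsumΓ g
  have hsum : Summable fun j => ((v j : ℂ) ^ 2) *
      (⟪(Λ j) (proj (W j) (T₁ f)), (Λ j) (proj (W j) (T f))⟫ +
        ⟪(Γ j) (proj (V j) (U₁ g)), (Γ j) (proj (V j) (U g))⟫) := by
    simpa [mul_add] using hsΛ.add hsΓ
  have hreΛ : Summable fun j => (v j) ^ 2 *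
      (⟪(Λ j) (proj (W j) (T₁ f)), (Λ j) (proj (W j) (T f))⟫).re := by
    have := hsΛ.map Complex.reCLM Complex.reCLM.continuous
    simpa [Function.comp_def, ← Complex.ofReal_pow, Complex.re_ofReal_mul] using this
  have hreΓ : Summable fun j => (v j) ^ 2 *
      (⟪(Γ j) (proj (V j) (U₁ g)), (Γ j) (proj (V j) (U g))⟫).re := by
    have := hsΓ.map Complex.reCLM Complex.reCLM.continuous
    simpa [Function.comp_def, ← Complex.ofReal_pow, Complex.re_ofReal_mul] using this
  have hsplit : (∑' j, (v j) ^ 2 *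
      (⟪(Λ j) (proj (W j) (T₁ f)), (Λ j) (proj (W j) (T f))⟫ +
        ⟪(Γ j) (proj (V j) (U₁ g)), (Γ j) (proj (V j) (U g))⟫).re)
      = (∑' j, (v j) ^ 2 * (⟪(Λ j) (proj (W j) (T₁ f)), (Λ j) (proj (W j) (T f))⟫).re)
        + (∑' j, (v j) ^ 2 * (⟪(Γ j) (proj (V j) (U₁ g)), (Γ j) (proj (V j) (U g))⟫).re) := by
    rw [← Summable.tsum_add hreΛ hreΓ]
    congr 1 with j
    simp [Complex.add_re, mul_add]
  refine ⟨hsum, ?_, ?_⟩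
  · rw [hsplit]
    have h1 := hlowerΛ f
    have h2 := hlowerΓ g
    have := min_le_left A C
    have := min_le_right A C
    nlinarith [sq_nonneg ‖(adjoint K₁) f‖, sq_nonneg ‖(adjoint K₂) g‖]
  · rw [hsplit]
    have h1 := hupperΛ f
    have h2 := hupperΓ g
    have := le_max_left B D
    have := le_max_right B D
    nlinarith [sq_nonneg ‖f‖, sq_nonneg ‖g‖]
end

section
/- Let Λ = {(W_j, Λ_j, v_j)}_{j∈J} be a (T,T₁)-controlled K₁-g-fusion frame for H with bounds A₁, B₁, and let Γ = {(V_j, Γ_j, v_j)}_{j∈J} be a (U,U₁)-controlled K₂-g-fusion frame for X with bounds A₂, B₂. Suppose W is a bounded invertible operator on H and V a bounded invertible operator on X such that W* commutes with T and T₁, V* commutes with U and U₁, K₁ W = W K₁ and K₂ V = V K₂. Set Δ_j = (Λ_j ⊕ Γ_j) P_{W_j ⊕ V_j} (W* ⊕ V*) and X_j = (W ⊕ V)(W_j ⊕ V_j) (a closed subspace of H ⊕ X). Then for every (f, g) ∈ H ⊕ X, min{A₁/‖W^{-1}‖², A₂/‖V^{-1}‖²} ‖(K₁ ⊕ K₂)*(f,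 g)‖² ≤ ∑_{j∈J} v_j² Re⟨Δ_j P_{X_j} (T₁ ⊕ U₁)(f, g), Δ_j P_{X_j} (T ⊕ U)(f, g)⟩ ≤ max{B₁‖W‖², B₂‖V‖²} ‖(f, g)‖²; that is, {(X_j, Δ_j, v_j)}_{j∈J} is a (T ⊕ U, T₁ ⊕ U₁)-controlled (K₁ ⊕ K₂)-g-fusion frame for H ⊕ X. -/
open ContinuousLinearMap
open scoped ComplexInnerProductSpace

lemma proj_adjoint_proj {H : Type*} [NormedAddCommGroup H] [InnerProductSpace ℂ H]
    [CompleteSpace H] (M : Submodule ℂ H) [CompleteSpace M] (Wop : H →L[ℂ] H)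
    [CompleteSpace (M.map (Wop : H →ₗ[ℂ] H))] (x : H) :
    _root_.proj M (adjoint Wop (_root_.proj (M.map (Wop : H →ₗ[ℂ] H)) x)) = _root_.proj M (adjoint Wop x) := by
  simp only [_root_.proj, ContinuousLinearMap.comp_apply, Submodule.subtypeL_apply]
  have hy : x - ((M.map (Wop : H →ₗ[ℂ] H)).orthogonalProjectionOnto x : H) ∈ (M.map (Wop : H →ₗ[ℂ] H))ᗮ :=
    Submodule.sub_starProjection_mem_orthogonal (K := M.map (Wop : H →ₗ[ℂ] H)) x
  have hmem : adjoint Wop x - adjoint Wop ((M.map (Wop : H →ₗ[ℂ] H)).orthogonalProjectionOnto x : H) ∈ Mᗮ := by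
    rw [← map_sub, Submodule.mem_orthogonal]
    intro u hu
    rw [adjoint_inner_right]
    exact (Submodule.mem_orthogonal _ _).mp hy (Wop u) (Submodule.mem_map_of_mem hu)
  have h0 : (M.orthogonalProjectionOnto
      (adjoint Wop x - adjoint Wop ((M.map (Wop : H →ₗ[ℂ] H)).orthogonalProjectionOnto x : H)) : H) = 0 := by
    rw [Submodule.orthogonalProjectionOnto_apply_of_mem_orthogonal hmem]; rfl
  rw [map_sub] at h0
  have := sub_eq_zero.mp (by exact_mod_cast h0)
  exact_mod_cast this.symm

lemma re_sq_mul (a : ℝ) (z : ℂ) : ((a : ℂ) ^ 2 * z).re = a ^ 2 * z.re := by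
  simp [Complex.mul_re, Complex.mul_im, pow_two]

set_option maxHeartbeats 1000000


/-- with `Λ` a `(T,T₁)`-controlled `K₁`-g-fusion frame for `H` (bounds
`A₁, B₁`), `Γ` a `(U,U₁)`-controlled `K₂`-g-fusion frame for `X` (bounds `A₂, B₂`), and
invertible `W`, `V` whose adjoints commute with the controlling operators and which commute
with `K₁`, `K₂` respectively, the family `{((W ⊕ V)(W_j ⊕ V_j),
(Λ_j ⊕ Γ_j) P_{W_j ⊕ V_j} (W* ⊕ V*), v_j)}` is a `(T ⊕ U, T₁ ⊕ U₁)`-controlled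
`(K₁ ⊕ K₂)`-g-fusion frame for `H ⊕ X` with bounds `min (A₁/‖W⁻¹‖²) (A₂/‖V⁻¹‖²)` and
`max (B₁‖W‖²) (B₂‖V‖²)`.  All direct-sum data is expressed componentwise. -/
theorem stmt5
    {H : Type*} [NormedAddCommGroup H] [InnerProductSpace ℂ H] [CompleteSpace H]
    {X : Type*} [NormedAddCommGroup X] [InnerProductSpace ℂ X] [CompleteSpace X]
    {J : Type*} [Countable J]
    {Hj : J → Type*} [∀ j, NormedAddCommGroup (Hj j)] [∀ j, InnerProductSpace ℂ (Hj j)]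
    [∀ j, CompleteSpace (Hj j)]
    {Xj : J → Type*} [∀ j, NormedAddCommGroup (Xj j)] [∀ j, InnerProductSpace ℂ (Xj j)]
    [∀ j, CompleteSpace (Xj j)]
    (W : J → Submodule ℂ H) [∀ j, CompleteSpace (W j)]
    (V : J → Submodule ℂ X) [∀ j, CompleteSpace (V j)]
    (v : J → ℝ) (hv : ∀ j, 0 < v j)
    (Λ : ∀ j, H →L[ℂ] Hj j) (Γ : ∀ j, X →L[ℂ] Xj j)
    (T T₁ K₁ : H →L[ℂ] H) (U U₁ K₂ : X →L[ℂ] X)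
    -- `T`, `T₁`, `U`, `U₁` are invertible
    (Tinv T₁inv : H →L[ℂ] H) (Uinv U₁inv : X →L[ℂ] X)
    (hT₁ : Tinv ∘L T = 1) (hT₂ : T ∘L Tinv = 1)
    (hT₁' : T₁inv ∘L T₁ = 1) (hT₂' : T₁ ∘L T₁inv = 1)
    (hU₁ : Uinv ∘L U = 1) (hU₂ : U ∘L Uinv = 1)
    (hU₁' : U₁inv ∘L U₁ = 1) (hU₂' : U₁ ∘L U₁inv = 1)
    -- `Λ` is a `(T,T₁)`-controlled `K₁`-g-fusion frame for `H` with bounds `A₁, B₁`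
    (A₁ B₁ : ℝ) (hA₁ : 0 < A₁) (hAB₁ : A₁ ≤ B₁)
    (hsumΛ : ∀ f : H, Summable fun j =>
      ((v j : ℂ) ^ 2) * ⟪(Λ j) (proj (W j) (T₁ f)), (Λ j) (proj (W j) (T f))⟫)
    (hlowerΛ : ∀ f : H, A₁ * ‖(adjoint K₁) f‖ ^ 2
      ≤ ∑' j, (v j) ^ 2 * (⟪(Λ j) (proj (W j) (T₁ f)), (Λ j) (proj (W j) (T f))⟫).re)
    (hupperΛ : ∀ f : H,
      (∑' j, (v j) ^ 2 * (⟪(Λ j) (proj (W j) (T₁ f)), (Λ j) (proj (W j) (T f))⟫).re)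
        ≤ B₁ * ‖f‖ ^ 2)
    -- `Γ` is a `(U,U₁)`-controlled `K₂`-g-fusion frame for `X` with bounds `A₂, B₂`
    (A₂ B₂ : ℝ) (hA₂ : 0 < A₂) (hAB₂ : A₂ ≤ B₂)
    (hsumΓ : ∀ g : X, Summable fun j =>
      ((v j : ℂ) ^ 2) * ⟪(Γ j) (proj (V j) (U₁ g)), (Γ j) (proj (V j) (U g))⟫)
    (hlowerΓ : ∀ g : X, A₂ * ‖(adjoint K₂) g‖ ^ 2
      ≤ ∑' j, (v j) ^ 2 * (⟪(Γ j) (proj (V j) (U₁ g)), (Γ j) (proj (V j) (U g))⟫).re)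
    (hupperΓ : ∀ g : X,
      (∑' j, (v j) ^ 2 * (⟪(Γ j) (proj (V j) (U₁ g)), (Γ j) (proj (V j) (U g))⟫).re)
        ≤ B₂ * ‖g‖ ^ 2)
    -- `W` and `V` are invertible; `W*` commutes with `T, T₁`; `V*` commutes with `U, U₁`;
    -- `K₁ W = W K₁` and `K₂ V = V K₂`
    (Wop Winv : H →L[ℂ] H) (Vop Vinv : X →L[ℂ] X)
    [∀ j, CompleteSpace ((W j).map (Wop : H →ₗ[ℂ] H))] [∀ j, CompleteSpace ((V j).map (Vop : X →ₗ[ℂ] X))]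
    (hW₁ : Winv ∘L Wop = 1) (hW₂ : Wop ∘L Winv = 1)
    (hV₁ : Vinv ∘L Vop = 1) (hV₂ : Vop ∘L Vinv = 1)
    (hWT : (adjoint Wop) ∘L T = T ∘L (adjoint Wop))
    (hWT₁ : (adjoint Wop) ∘L T₁ = T₁ ∘L (adjoint Wop))
    (hVU : (adjoint Vop) ∘L U = U ∘L (adjoint Vop))
    (hVU₁ : (adjoint Vop) ∘L U₁ = U₁ ∘L (adjoint Vop))
    (hK₁W : K₁ ∘L Wop = Wop ∘L K₁) (hK₂V : K₂ ∘L Vop = Vop ∘L K₂) :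
    ∀ (f : H) (g : X),
      (Summable fun j => ((v j : ℂ) ^ 2) *
        (⟪(Λ j) (proj (W j) ((adjoint Wop) (proj ((W j).map (Wop : H →ₗ[ℂ] H)) (T₁ f)))),
            (Λ j) (proj (W j) ((adjoint Wop) (proj ((W j).map (Wop : H →ₗ[ℂ] H)) (T f))))⟫ +
          ⟪(Γ j) (proj (V j) ((adjoint Vop) (proj ((V j).map (Vop : X →ₗ[ℂ] X)) (U₁ g)))),
            (Γ j) (proj (V j) ((adjoint Vop) (proj ((V j).map (Vop : X →ₗ[ℂ] X)) (U g))))⟫)) ∧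
      min (A₁ / ‖Winv‖ ^ 2) (A₂ / ‖Vinv‖ ^ 2) *
          (‖(adjoint K₁) f‖ ^ 2 + ‖(adjoint K₂) g‖ ^ 2)
        ≤ (∑' j, (v j) ^ 2 *
            (⟪(Λ j) (proj (W j) ((adjoint Wop) (proj ((W j).map (Wop : H →ₗ[ℂ] H)) (T₁ f)))),
                (Λ j) (proj (W j) ((adjoint Wop) (proj ((W j).map (Wop : H →ₗ[ℂ] H)) (T f))))⟫ +
              ⟪(Γ j) (proj (V j) ((adjoint Vop) (proj ((V j).map (Vop : X →ₗ[ℂ] X)) (U₁ g)))),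
                (Γ j) (proj (V j) ((adjoint Vop) (proj ((V j).map (Vop : X →ₗ[ℂ] X)) (U g))))⟫).re) ∧
      (∑' j, (v j) ^ 2 *
          (⟪(Λ j) (proj (W j) ((adjoint Wop) (proj ((W j).map (Wop : H →ₗ[ℂ] H)) (T₁ f)))),
              (Λ j) (proj (W j) ((adjoint Wop) (proj ((W j).map (Wop : H →ₗ[ℂ] H)) (T f))))⟫ +
            ⟪(Γ j) (proj (V j) ((adjoint Vop) (proj ((V j).map (Vop : X →ₗ[ℂ] X)) (U₁ g)))),
              (Γ j) (proj (V j) ((adjoint Vop) (proj ((V j).map (Vop : X →ₗ[ℂ] X)) (U g))))⟫).re)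
        ≤ max (B₁ * ‖Wop‖ ^ 2) (B₂ * ‖Vop‖ ^ 2) * (‖f‖ ^ 2 + ‖g‖ ^ 2) := by

  intro f g
  have hcT : adjoint Wop (T f) = T (adjoint Wop f) := by
    simpa using ContinuousLinearMap.ext_iff.mp hWT f
  have hcT₁ : adjoint Wop (T₁ f) = T₁ (adjoint Wop f) := by
    simpa using ContinuousLinearMap.ext_iff.mp hWT₁ f
  have hcU : adjoint Vop (U g) = U (adjoint Vop g) := by
    simpa using ContinuousLinearMap.ext_iff.mp hVU g
  have hcU₁ : adjoint Vop (U₁ g) = U₁ (adjoint Vop g) := by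
    simpa using ContinuousLinearMap.ext_iff.mp hVU₁ g
  simp only [proj_adjoint_proj, hcT, hcT₁, hcU, hcU₁]
  have hs1 := hsumΛ (adjoint Wop f)
  have hs2 := hsumΓ (adjoint Vop g)
  have hr1 : Summable fun j => (v j) ^ 2 *
      (⟪(Λ j) (proj (W j) (T₁ (adjoint Wop f))), (Λ j) (proj (W j) (T (adjoint Wop f)))⟫).re := by
    exact ((Complex.hasSum_re hs1.hasSum).summable).congr fun j => re_sq_mul (v j) _
  have hr2 : Summable fun j => (v j) ^ 2 *
      (⟪(Γ j) (proj (V j) (U₁ (adjoint Vop g))), (Γ j) (proj (V j) (U (adjoint Vop g)))⟫).re := by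
    exact ((Complex.hasSum_re hs2.hasSum).summable).congr fun j => re_sq_mul (v j) _
  have hsum_eq : (∑' j, (v j) ^ 2 *
      (⟪(Λ j) (proj (W j) (T₁ (adjoint Wop f))), (Λ j) (proj (W j) (T (adjoint Wop f)))⟫ +
        ⟪(Γ j) (proj (V j) (U₁ (adjoint Vop g))), (Γ j) (proj (V j) (U (adjoint Vop g)))⟫).re)
      = (∑' j, (v j) ^ 2 *
          (⟪(Λ j) (proj (W j) (T₁ (adjoint Wop f))), (Λ j) (proj (W j) (T (adjoint Wop f)))⟫).re)
        + (∑' j, (v j) ^ 2 *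
          (⟪(Γ j) (proj (V j) (U₁ (adjoint Vop g))), (Γ j) (proj (V j) (U (adjoint Vop g)))⟫).re) := by
    rw [← Summable.tsum_add hr1 hr2]
    exact tsum_congr fun j => by simp [Complex.add_re, mul_add]
  have hl1 := hlowerΛ (adjoint Wop f)
  have hl2 := hlowerΓ (adjoint Vop g)
  have hu1 := hupperΛ (adjoint Wop f)
  have hu2 := hupperΓ (adjoint Vop g)
  refine ⟨by simpa [mul_add] using hs1.add hs2, ?_, ?_⟩
  · -- lower bound
    have hK1 : ‖adjoint K₁ f‖ ≤ ‖Winv‖ * ‖adjoint K₁ (adjoint Wop f)‖ := by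
      have h1 : adjoint K₁ (adjoint Wop f) = adjoint Wop (adjoint K₁ f) := by
        rw [← ContinuousLinearMap.comp_apply, ← adjoint_comp, ← hK₁W, adjoint_comp,
          ContinuousLinearMap.comp_apply]
      have h2 : adjoint Winv (adjoint Wop (adjoint K₁ f)) = adjoint K₁ f := by
        rw [← ContinuousLinearMap.comp_apply, ← adjoint_comp, hW₂,
          ContinuousLinearMap.one_def, adjoint_id, ContinuousLinearMap.id_apply]
      calc ‖adjoint K₁ f‖ = ‖adjoint Winv (adjoint K₁ (adjoint Wop f))‖ := by rw [h1, h2]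
        _ ≤ ‖adjoint Winv‖ * ‖adjoint K₁ (adjoint Wop f)‖ := le_opNorm _ _
        _ = ‖Winv‖ * ‖adjoint K₁ (adjoint Wop f)‖ := by rw [adjoint.norm_map]
    have hK2 : ‖adjoint K₂ g‖ ≤ ‖Vinv‖ * ‖adjoint K₂ (adjoint Vop g)‖ := by
      have h1 : adjoint K₂ (adjoint Vop g) = adjoint Vop (adjoint K₂ g) := by
        rw [← ContinuousLinearMap.comp_apply, ← adjoint_comp, ← hK₂V, adjoint_comp,
          ContinuousLinearMap.comp_apply]
      have h2 : adjoint Vinv (adjoint Vop (adjoint K₂ g)) = adjoint K₂ g := by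
        rw [← ContinuousLinearMap.comp_apply, ← adjoint_comp, hV₂,
          ContinuousLinearMap.one_def, adjoint_id, ContinuousLinearMap.id_apply]
      calc ‖adjoint K₂ g‖ = ‖adjoint Vinv (adjoint K₂ (adjoint Vop g))‖ := by rw [h1, h2]
        _ ≤ ‖adjoint Vinv‖ * ‖adjoint K₂ (adjoint Vop g)‖ := le_opNorm _ _
        _ = ‖Vinv‖ * ‖adjoint K₂ (adjoint Vop g)‖ := by rw [adjoint.norm_map]
    have step1 : A₁ / ‖Winv‖ ^ 2 * ‖adjoint K₁ f‖ ^ 2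
        ≤ A₁ * ‖adjoint K₁ (adjoint Wop f)‖ ^ 2 := by
      rcases eq_or_lt_of_le (norm_nonneg Winv) with h | h
      · have hz : ‖adjoint K₁ f‖ = 0 := le_antisymm (by rw [← h, zero_mul] at hK1; exact hK1)
          (norm_nonneg _)
        calc A₁ / ‖Winv‖ ^ 2 * ‖adjoint K₁ f‖ ^ 2 = 0 := by rw [hz]; ring
          _ ≤ A₁ * ‖adjoint K₁ (adjoint Wop f)‖ ^ 2 := by positivity
      · rw [div_mul_eq_mul_div, div_le_iff₀ (by positivity)]
        calc A₁ * ‖adjoint K₁ f‖ ^ 2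
            ≤ A₁ * (‖Winv‖ * ‖adjoint K₁ (adjoint Wop f)‖) ^ 2 :=
              mul_le_mul_of_nonneg_left (pow_le_pow_left₀ (norm_nonneg _) hK1 2) hA₁.le
          _ = A₁ * ‖adjoint K₁ (adjoint Wop f)‖ ^ 2 * ‖Winv‖ ^ 2 := by ring
    have step2 : A₂ / ‖Vinv‖ ^ 2 * ‖adjoint K₂ g‖ ^ 2
        ≤ A₂ * ‖adjoint K₂ (adjoint Vop g)‖ ^ 2 := by
      rcases eq_or_lt_of_le (norm_nonneg Vinv) with h | h
      · have hz : ‖adjoint K₂ g‖ = 0 := le_antisymm (by rw [← h, zero_mul] at hK2; exact hK2)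
          (norm_nonneg _)
        calc A₂ / ‖Vinv‖ ^ 2 * ‖adjoint K₂ g‖ ^ 2 = 0 := by rw [hz]; ring
          _ ≤ A₂ * ‖adjoint K₂ (adjoint Vop g)‖ ^ 2 := by positivity
      · rw [div_mul_eq_mul_div, div_le_iff₀ (by positivity)]
        calc A₂ * ‖adjoint K₂ g‖ ^ 2
            ≤ A₂ * (‖Vinv‖ * ‖adjoint K₂ (adjoint Vop g)‖) ^ 2 :=
              mul_le_mul_of_nonneg_left (pow_le_pow_left₀ (norm_nonneg _) hK2 2) hA₂.le
          _ = A₂ * ‖adjoint K₂ (adjoint Vop g)‖ ^ 2 * ‖Vinv‖ ^ 2 := by ring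
    rw [hsum_eq, mul_add]
    refine add_le_add (le_trans ?_ hl1) (le_trans ?_ hl2)
    · exact le_trans (mul_le_mul_of_nonneg_right (min_le_left _ _) (by positivity)) step1
    · exact le_trans (mul_le_mul_of_nonneg_right (min_le_right _ _) (by positivity)) step2
  · -- upper bound
    have hnf : ‖adjoint Wop f‖ ≤ ‖Wop‖ * ‖f‖ := by
      calc ‖adjoint Wop f‖ ≤ ‖adjoint Wop‖ * ‖f‖ := le_opNorm _ _
        _ = ‖Wop‖ * ‖f‖ := by rw [adjoint.norm_map]
    have hng : ‖adjoint Vop g‖ ≤ ‖Vop‖ * ‖g‖ := by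
      calc ‖adjoint Vop g‖ ≤ ‖adjoint Vop‖ * ‖g‖ := le_opNorm _ _
        _ = ‖Vop‖ * ‖g‖ := by rw [adjoint.norm_map]
    have hB₁ : (0:ℝ) < B₁ := lt_of_lt_of_le hA₁ hAB₁
    have hB₂ : (0:ℝ) < B₂ := lt_of_lt_of_le hA₂ hAB₂
    rw [hsum_eq, mul_add]
    refine add_le_add (le_trans hu1 ?_) (le_trans hu2 ?_)
    · have h1 : B₁ * ‖adjoint Wop f‖ ^ 2 ≤ B₁ * ‖Wop‖ ^ 2 * ‖f‖ ^ 2 := by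
        calc B₁ * ‖adjoint Wop f‖ ^ 2 ≤ B₁ * (‖Wop‖ * ‖f‖) ^ 2 :=
              mul_le_mul_of_nonneg_left (pow_le_pow_left₀ (norm_nonneg _) hnf 2) hB₁.le
          _ = B₁ * ‖Wop‖ ^ 2 * ‖f‖ ^ 2 := by ring
      exact le_trans h1 (mul_le_mul_of_nonneg_right (le_max_left _ _) (sq_nonneg _))
    · have h1 : B₂ * ‖adjoint Vop g‖ ^ 2 ≤ B₂ * ‖Vop‖ ^ 2 * ‖g‖ ^ 2 := by
        calc B₂ * ‖adjoint Vop g‖ ^ 2 ≤ B₂ * (‖Vop‖ * ‖g‖) ^ 2 :=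
              mul_le_mul_of_nonneg_left (pow_le_pow_left₀ (norm_nonneg _) hng 2) hB₂.le
          _ = B₂ * ‖Vop‖ ^ 2 * ‖g‖ ^ 2 := by ring
      exact le_trans h1 (mul_le_mul_of_nonneg_right (le_max_right _ _) (sq_nonneg _))
end

section
/- Let S_{TΛΓU} be the frame operator for the pair of a (T,T)-controlled g-fusion Bessel sequence Λ_T = {(W_j, Λ_j, w_j)}_{j∈J} with bound D₁ and a (U,U)-controlled g-fusion Bessel sequence Γ_U = {(V_j, Γ_j, v_j)}_{j∈J} with bound D₂. Suppose λ ∈ (0,1) is such that ‖f − S_{TΛΓU} f‖ ≤ λ ‖f‖ for all f ∈ H. Then for every f ∈ H, ((1 − λ)²/D₂) ‖f‖² ≤ ∑_{j∈J} w_j² ‖Λ_j P_{W_j} T f‖²; that is, Λ_T is a (T,T)-controlled g-fusion frame for H. -/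
open ContinuousLinearMap
open scoped ComplexInnerProductSpace

/-- Cauchy–Schwarz inequality for `tsum`s of nonnegative reals. -/
lemma tsum_cauchy_schwarz {J : Type*} {a b : J → ℝ} (ha : ∀ j, 0 ≤ a j) (hb : ∀ j, 0 ≤ b j)
    (ha2 : Summable fun j => a j ^ 2) (hb2 : Summable fun j => b j ^ 2) :
    (∑' j, a j * b j) ^ 2 ≤ (∑' j, a j ^ 2) * ∑' j, b j ^ 2 := by
  have hab : Summable fun j => a j * b j := by
    refine Summable.of_nonneg_of_le (fun j => mul_nonneg (ha j) (hb j))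
      (fun j => ?_) (ha2.add hb2)
    nlinarith [sq_nonneg (a j - b j)]
  set A := ∑' j, a j ^ 2 with hA
  set B := ∑' j, b j ^ 2 with hB
  have hA0 : 0 ≤ A := tsum_nonneg fun j => sq_nonneg _
  have hB0 : 0 ≤ B := tsum_nonneg fun j => sq_nonneg _
  have hle : ∑' j, a j * b j ≤ Real.sqrt (A * B) := by
    refine Summable.tsum_le_of_sum_le hab fun s => ?_
    have h1 : (∑ j ∈ s, a j * b j) ^ 2 ≤ (∑ j ∈ s, a j ^ 2) * ∑ j ∈ s, b j ^ 2 :=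
      Finset.sum_mul_sq_le_sq_mul_sq s a b
    have h2 : (∑ j ∈ s, a j ^ 2) ≤ A := Summable.sum_le_tsum s (fun j _ => sq_nonneg _) ha2
    have h3 : (∑ j ∈ s, b j ^ 2) ≤ B := Summable.sum_le_tsum s (fun j _ => sq_nonneg _) hb2
    have hs0 : 0 ≤ ∑ j ∈ s, a j * b j :=
      Finset.sum_nonneg fun j _ => mul_nonneg (ha j) (hb j)
    rw [Real.le_sqrt hs0 (mul_nonneg hA0 hB0)]
    calc (∑ j ∈ s, a j * b j) ^ 2 ≤ (∑ j ∈ s, a j ^ 2) * ∑ j ∈ s, b j ^ 2 := h1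
      _ ≤ A * B := by
        have := Finset.sum_nonneg (s := s) fun j (_ : j ∈ s) => sq_nonneg (b j)
        exact mul_le_mul h2 h3 this hA0
  have h0 : 0 ≤ ∑' j, a j * b j := tsum_nonneg fun j => mul_nonneg (ha j) (hb j)
  nlinarith [Real.sq_sqrt (mul_nonneg hA0 hB0), Real.sqrt_nonneg (A * B)]

/-- if the frame operator `S_{TΛΓU}` of the pair `(Λ_T, Γ_U)` satisfies
`‖f − S f‖ ≤ λ ‖f‖` with `λ ∈ (0,1)`, then `Λ_T` is a `(T,T)`-controlled g-fusion
frame for `H` with lower bound `(1 − λ)² / D₂`. -/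
theorem stmt15
    {H : Type*} [NormedAddCommGroup H] [InnerProductSpace ℂ H] [CompleteSpace H]
    {J : Type*} [Countable J]
    {Hj : J → Type*} [∀ j, NormedAddCommGroup (Hj j)] [∀ j, InnerProductSpace ℂ (Hj j)]
    [∀ j, CompleteSpace (Hj j)]
    (W V : J → Submodule ℂ H) [∀ j, CompleteSpace (W j)] [∀ j, CompleteSpace (V j)]
    (w v : J → ℝ) (hw : ∀ j, 0 < w j) (hv : ∀ j, 0 < v j)
    (Λ Γ : ∀ j, H →L[ℂ] Hj j)
    (T U : H →L[ℂ] H)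
    -- `T` and `U` are invertible
    (Tinv Uinv : H →L[ℂ] H)
    (hT₁ : Tinv ∘L T = 1) (hT₂ : T ∘L Tinv = 1)
    (hU₁ : Uinv ∘L U = 1) (hU₂ : U ∘L Uinv = 1)
    -- `Λ_T` is a `(T,T)`-controlled g-fusion Bessel sequence with bound `D₁`
    (D₁ : ℝ) (hD₁ : 0 < D₁)
    (hsumΛ : ∀ f : H, Summable fun j => (w j) ^ 2 * ‖(Λ j) (proj (W j) (T f))‖ ^ 2)
    (hBesselΛ : ∀ f : H,
      (∑' j, (w j) ^ 2 * ‖(Λ j) (proj (W j) (T f))‖ ^ 2) ≤ D₁ * ‖f‖ ^ 2)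
    -- `Γ_U` is a `(U,U)`-controlled g-fusion Bessel sequence with bound `D₂`
    (D₂ : ℝ) (hD₂ : 0 < D₂)
    (hsumΓ : ∀ f : H, Summable fun j => (v j) ^ 2 * ‖(Γ j) (proj (V j) (U f))‖ ^ 2)
    (hBesselΓ : ∀ f : H,
      (∑' j, (v j) ^ 2 * ‖(Γ j) (proj (V j) (U f))‖ ^ 2) ≤ D₂ * ‖f‖ ^ 2)
    -- `S` is the frame operator `S_{TΛΓU}` for the pair `(Λ_T, Γ_U)`
    (S : H →L[ℂ] H)
    (hS : ∀ f : H, HasSum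
      (fun j => (v j * w j) •
        (adjoint T) (proj (W j) ((adjoint (Λ j)) ((Γ j) (proj (V j) (U f)))))) (S f))
    (lam : ℝ) (hlam₀ : 0 < lam) (hlam₁ : lam < 1)
    (hpert : ∀ f : H, ‖f - S f‖ ≤ lam * ‖f‖) :
    ∀ f : H,
      ((1 - lam) ^ 2 / D₂) * ‖f‖ ^ 2
        ≤ ∑' j, (w j) ^ 2 * ‖(Λ j) (proj (W j) (T f))‖ ^ 2 := by
  intro f
  set a : J → ℝ := fun j => w j * ‖(Λ j) (proj (W j) (T f))‖ with ha_def
  set b : J → ℝ := fun j => v j * ‖(Γ j) (proj (V j) (U f))‖ with hb_def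
  have ha0 : ∀ j, 0 ≤ a j := fun j => mul_nonneg (hw j).le (norm_nonneg _)
  have hb0 : ∀ j, 0 ≤ b j := fun j => mul_nonneg (hv j).le (norm_nonneg _)
  have ha2eq : (fun j => a j ^ 2) = fun j => (w j) ^ 2 * ‖(Λ j) (proj (W j) (T f))‖ ^ 2 :=
    funext fun j => mul_pow _ _ _
  have hb2eq : (fun j => b j ^ 2) = fun j => (v j) ^ 2 * ‖(Γ j) (proj (V j) (U f))‖ ^ 2 :=
    funext fun j => mul_pow _ _ _
  have ha2 : Summable fun j => a j ^ 2 := by rw [ha2eq]; exact hsumΛ f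
  have hb2 : Summable fun j => b j ^ 2 := by rw [hb2eq]; exact hsumΓ f
  set A := ∑' j, (w j) ^ 2 * ‖(Λ j) (proj (W j) (T f))‖ ^ 2 with hA
  have hA0 : 0 ≤ A := tsum_nonneg fun j =>
    mul_nonneg (sq_nonneg _) (sq_nonneg _)
  have hAeq : (∑' j, a j ^ 2) = A := by rw [ha2eq]
  have hBle : (∑' j, b j ^ 2) ≤ D₂ * ‖f‖ ^ 2 := by rw [hb2eq]; exact hBesselΓ f
  -- key inner product computation
  have key : ∀ j, ⟪f, (v j * w j) •
      (adjoint T) (proj (W j) ((adjoint (Λ j)) ((Γ j) (proj (V j) (U f)))))⟫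
      = ((v j * w j : ℝ) : ℂ) *
        ⟪(Λ j) (proj (W j) (T f)), (Γ j) (proj (V j) (U f))⟫ := by
    intro j
    rw [RCLike.real_smul_eq_coe_smul (K := ℂ), inner_smul_right, adjoint_inner_right]
    congr 1
    show ⟪T f, (W j).starProjection
        ((adjoint (Λ j)) ((Γ j) (proj (V j) (U f))))⟫ = _
    rw [← Submodule.inner_starProjection_left_eq_right, ← adjoint_inner_right (Λ j)]
    rfl
  -- sum of inner products
  have hinner : HasSum (fun j => ⟪f, (v j * w j) •
      (adjoint T) (proj (W j) ((adjoint (Λ j)) ((Γ j) (proj (V j) (U f)))))⟫)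
      ⟪f, S f⟫ := (innerSL ℂ f).hasSum (hS f)
  have hbound : ∀ j, ‖⟪f, (v j * w j) •
      (adjoint T) (proj (W j) ((adjoint (Λ j)) ((Γ j) (proj (V j) (U f)))))⟫‖
      ≤ a j * b j := by
    intro j
    rw [key j]
    rw [norm_mul, Complex.norm_real, Real.norm_eq_abs,
      abs_of_nonneg (mul_nonneg (hv j).le (hw j).le)]
    calc v j * w j * ‖⟪(Λ j) (proj (W j) (T f)), (Γ j) (proj (V j) (U f))⟫‖
        ≤ v j * w j * (‖(Λ j) (proj (W j) (T f))‖ * ‖(Γ j) (proj (V j) (U f))‖) := by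
          have := norm_inner_le_norm (𝕜 := ℂ) ((Λ j) (proj (W j) (T f)))
            ((Γ j) (proj (V j) (U f)))
          exact mul_le_mul_of_nonneg_left this (mul_nonneg (hv j).le (hw j).le)
      _ = a j * b j := by simp only [ha_def, hb_def]; ring
  have hab : Summable fun j => a j * b j := by
    refine Summable.of_nonneg_of_le (fun j => mul_nonneg (ha0 j) (hb0 j))
      (fun j => ?_) (ha2.add hb2)
    nlinarith [sq_nonneg (a j - b j)]
  have hnorm_summable : Summable fun j => ‖⟪f, (v j * w j) •
      (adjoint T) (proj (W j) ((adjoint (Λ j)) ((Γ j) (proj (V j) (U f)))))⟫‖ :=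
    Summable.of_nonneg_of_le (fun j => norm_nonneg _) hbound hab
  have hSf_le : ‖⟪f, S f⟫‖ ≤ ∑' j, a j * b j := by
    calc ‖⟪f, S f⟫‖ = ‖∑' j, ⟪f, (v j * w j) •
        (adjoint T) (proj (W j) ((adjoint (Λ j)) ((Γ j) (proj (V j) (U f)))))⟫‖ := by
          rw [hinner.tsum_eq]
      _ ≤ ∑' j, ‖⟪f, (v j * w j) •
        (adjoint T) (proj (W j) ((adjoint (Λ j)) ((Γ j) (proj (V j) (U f)))))⟫‖ :=
          norm_tsum_le_tsum_norm hnorm_summable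
      _ ≤ ∑' j, a j * b j := Summable.tsum_le_tsum hbound hnorm_summable hab
  -- lower bound for ‖⟪f, S f⟫‖
  have hlow : (1 - lam) * ‖f‖ ^ 2 ≤ ‖⟪f, S f⟫‖ := by
    have h1 : ⟪f, S f⟫ = ⟪f, f⟫ - ⟪f, f - S f⟫ := by rw [inner_sub_right]; ring
    have h2 : ‖⟪f, f⟫‖ = ‖f‖ ^ 2 := by
      rw [inner_self_eq_norm_sq_to_K]
      rw [norm_pow]; simp
    have h3 : ‖⟪f, f - S f⟫‖ ≤ lam * ‖f‖ ^ 2 := by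
      calc ‖⟪f, f - S f⟫‖ ≤ ‖f‖ * ‖f - S f‖ := norm_inner_le_norm _ _
        _ ≤ ‖f‖ * (lam * ‖f‖) :=
            mul_le_mul_of_nonneg_left (hpert f) (norm_nonneg _)
        _ = lam * ‖f‖ ^ 2 := by ring
    have h4 : ‖⟪f, f⟫‖ - ‖⟪f, f - S f⟫‖ ≤ ‖⟪f, S f⟫‖ := by
      rw [h1]; exact norm_sub_norm_le _ _
    rw [h2] at h4
    linarith
  -- combine
  have hcs : (∑' j, a j * b j) ^ 2 ≤ A * (D₂ * ‖f‖ ^ 2) := by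
    calc (∑' j, a j * b j) ^ 2 ≤ (∑' j, a j ^ 2) * ∑' j, b j ^ 2 :=
        tsum_cauchy_schwarz ha0 hb0 ha2 hb2
      _ ≤ A * (D₂ * ‖f‖ ^ 2) := by
          rw [hAeq]
          exact mul_le_mul_of_nonneg_left hBle hA0
  rcases eq_or_lt_of_le (norm_nonneg f) with h0 | h0
  · rw [← h0]
    simpa using hA0
  · have hab0 : 0 ≤ ∑' j, a j * b j := tsum_nonneg fun j => mul_nonneg (ha0 j) (hb0 j)
    have hnn : 0 ≤ (1 - lam) * ‖f‖ ^ 2 := by nlinarith [sq_nonneg ‖f‖]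
    have hfinal : ((1 - lam) * ‖f‖ ^ 2) ^ 2 ≤ A * (D₂ * ‖f‖ ^ 2) :=
      le_trans (pow_le_pow_left₀ hnn (hlow.trans hSf_le) 2) hcs
    rw [div_mul_eq_mul_div, div_le_iff₀ hD₂]
    have h5 : (1 - lam) ^ 2 * ‖f‖ ^ 2 * ‖f‖ ^ 2 ≤ A * D₂ * ‖f‖ ^ 2 := by
      calc (1 - lam) ^ 2 * ‖f‖ ^ 2 * ‖f‖ ^ 2 = ((1 - lam) * ‖f‖ ^ 2) ^ 2 := by ring
        _ ≤ A * (D₂ * ‖f‖ ^ 2) := hfinal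
        _ = A * D₂ * ‖f‖ ^ 2 := by ring
    exact le_of_mul_le_mul_right h5 (pow_pos h0 2)
end

section
/- Let K₁, K₂ be bounded operators on H and suppose Λ_TU = {(W_j, Λ_j, v_j)}_{j∈J} is both a (T,U)-controlled K₁-g-fusion frame for H (with bounds A₁, B) and a (T,U)-controlled K₂-g-fusion frame for H (with bounds A₂, B). Then Λ_TU is a (T,U)-controlled (K₁ K₂)-g-fusion frame for H; that is, there exists A > 0 such that for all f ∈ H, A ‖(K₁ K₂)* f‖² ≤ ∑_{j∈J} v_j² Re⟨Λ_j P_{W_j} U f, Λ_j P_{W_j} T f⟩ ≤ B ‖f‖². -/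
open ContinuousLinearMap
open scoped ComplexInnerProductSpace

/-- if `Λ_TU` is a `(T,U)`-controlled `K₁`-g-fusion frame and a
`(T,U)`-controlled `K₂`-g-fusion frame (with common upper bound `B`), then it is a
`(T,U)`-controlled `(K₁ K₂)`-g-fusion frame. -/
theorem stmt17
    {H : Type*} [NormedAddCommGroup H] [InnerProductSpace ℂ H] [CompleteSpace H]
    {J : Type*} [Countable J]
    {Hj : J → Type*} [∀ j, NormedAddCommGroup (Hj j)] [∀ j, InnerProductSpace ℂ (Hj j)]
    [∀ j, CompleteSpace (Hj j)]
    (W : J → Submodule ℂ H) [∀ j, CompleteSpace (W j)]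
    (v : J → ℝ) (hv : ∀ j, 0 < v j)
    (Λ : ∀ j, H →L[ℂ] Hj j)
    (T U K₁ K₂ : H →L[ℂ] H)
    -- `T` and `U` are invertible
    (Tinv Uinv : H →L[ℂ] H)
    (hT₁ : Tinv ∘L T = 1) (hT₂ : T ∘L Tinv = 1)
    (hU₁ : Uinv ∘L U = 1) (hU₂ : U ∘L Uinv = 1)
    -- the series defining the frame conditions converge
    (hsum : ∀ f : H, Summable fun j =>
      ((v j : ℂ) ^ 2) * ⟪(Λ j) (proj (W j) (U f)), (Λ j) (proj (W j) (T f))⟫)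
    -- `Λ_TU` is a `(T,U)`-controlled `K₁`-g-fusion frame with bounds `A₁, B`
    (A₁ B : ℝ) (hA₁ : 0 < A₁) (hAB₁ : A₁ ≤ B)
    (hlower₁ : ∀ f : H, A₁ * ‖(adjoint K₁) f‖ ^ 2
      ≤ ∑' j, (v j) ^ 2 * (⟪(Λ j) (proj (W j) (U f)), (Λ j) (proj (W j) (T f))⟫).re)
    (hupper : ∀ f : H,
      (∑' j, (v j) ^ 2 * (⟪(Λ j) (proj (W j) (U f)), (Λ j) (proj (W j) (T f))⟫).re)
        ≤ B * ‖f‖ ^ 2)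
    -- `Λ_TU` is a `(T,U)`-controlled `K₂`-g-fusion frame with bounds `A₂, B`
    (A₂ : ℝ) (hA₂ : 0 < A₂) (hAB₂ : A₂ ≤ B)
    (hlower₂ : ∀ f : H, A₂ * ‖(adjoint K₂) f‖ ^ 2
      ≤ ∑' j, (v j) ^ 2 * (⟪(Λ j) (proj (W j) (U f)), (Λ j) (proj (W j) (T f))⟫).re) :
    ∃ A > 0, ∀ f : H,
      A * ‖(adjoint (K₁ ∘L K₂)) f‖ ^ 2
          ≤ (∑' j, (v j) ^ 2 *
              (⟪(Λ j) (proj (W j) (U f)), (Λ j) (proj (W j) (T f))⟫).re) ∧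
      (∑' j, (v j) ^ 2 * (⟪(Λ j) (proj (W j) (U f)), (Λ j) (proj (W j) (T f))⟫).re)
          ≤ B * ‖f‖ ^ 2 := by
  refine ⟨A₁ / (‖K₂‖ ^ 2 + 1), by positivity, fun f => ⟨?_, hupper f⟩⟩
  have h1 : ‖(adjoint (K₁ ∘L K₂)) f‖ ≤ ‖K₂‖ * ‖(adjoint K₁) f‖ := by
    rw [adjoint_comp]
    calc ‖(adjoint K₂ ∘L adjoint K₁) f‖ = ‖adjoint K₂ ((adjoint K₁) f)‖ := rfl
      _ ≤ ‖adjoint K₂‖ * ‖(adjoint K₁) f‖ := le_opNorm _ _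
      _ = ‖K₂‖ * ‖(adjoint K₁) f‖ := by rw [adjoint.norm_map]
  have h2 : ‖(adjoint (K₁ ∘L K₂)) f‖ ^ 2 ≤ ‖K₂‖ ^ 2 * ‖(adjoint K₁) f‖ ^ 2 := by
    rw [← mul_pow]
    exact pow_le_pow_left₀ (norm_nonneg _) h1 2
  calc A₁ / (‖K₂‖ ^ 2 + 1) * ‖(adjoint (K₁ ∘L K₂)) f‖ ^ 2
      ≤ A₁ / (‖K₂‖ ^ 2 + 1) * (‖K₂‖ ^ 2 * ‖(adjoint K₁) f‖ ^ 2) := by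
        apply mul_le_mul_of_nonneg_left h2; positivity
    _ ≤ A₁ * ‖(adjoint K₁) f‖ ^ 2 := by
        rw [div_mul_eq_mul_div, div_le_iff₀ (by positivity)]
        nlinarith [norm_nonneg ((adjoint K₁) f), sq_nonneg ‖K₂‖, hA₁.le]
    _ ≤ _ := hlower₁ f
end
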